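/- In Jia's dcpo P = ℕ × ℕ × (ℕ ∪ {∞}) (order as above), the family C_j = ⋃_{k ≥ j} ↓(2,k,∞) ∪ {(1,n,∞) : n ∈ ℕ}, for j ∈ ℕ, is a filtered family of Scott closed sets each of which meets {(2,j,∞) : j ∈ ℕ}, but ⋂_j C_j ∩ {(2,j,∞) : j ∈ ℕ} = ∅. -/

import Mathlib

/-- Jia's dcpo: the underlying set `ℕ × ℕ × (ℕ ∪ {∞})` (positive naturals). -/
structure JiaP where
  i : ℕ+
  j : ℕ+
  m : WithTop ℕ+

namespace JiaP

/-- `(i₁,j₁,m₁) ≤ (i₂,j₂,m₂)` iff `i₁ = i₂, j₁ = j₂, m₁ ≤ m₂`, or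
`i₂ = i₁ + 1, m₁ ≤ j₂, m₂ = ∞`. -/
instance : PartialOrder JiaP where
  le x y := (x.i = y.i ∧ x.j = y.j ∧ x.m ≤ y.m) ∨
    (y.i = x.i + 1 ∧ x.m ≤ (y.j : WithTop ℕ+) ∧ y.m = ⊤)
  le_refl x := Or.inl ⟨rfl, rfl, le_refl _⟩
  le_trans x y z h g := by
    rcases h with ⟨h1, h2, h3⟩ | ⟨h1, h2, h3⟩ <;> rcases g with ⟨g1, g2, g3⟩ | ⟨g1, g2, g3⟩
    · exact Or.inl ⟨h1.trans g1, h2.trans g2, h3.trans g3⟩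
    · exact Or.inr ⟨by rw [g1, ← h1], h3.trans g2, g3⟩
    · exact Or.inr ⟨by rw [← g1, h1], by rw [← g2]; exact h2, top_le_iff.mp (h3 ▸ g3)⟩
    · exact absurd (top_le_iff.mp (h3 ▸ g2)) WithTop.coe_ne_top
  le_antisymm x y h g := by
    rcases h with ⟨h1, h2, h3⟩ | ⟨h1, h2, h3⟩ <;> rcases g with ⟨g1, g2, g3⟩ | ⟨g1, g2, g3⟩
    · cases x; cases y
      simp only [JiaP.mk.injEq]
      exact ⟨h1, h2, le_antisymm h3 g3⟩
    · exfalso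
      have hh := h1.symm.trans g1
      have : (y.i : ℕ) = (y.i : ℕ) + 1 := by exact_mod_cast congrArg PNat.val hh
      omega
    · exfalso
      have hh := g1.symm.trans h1
      have : (x.i : ℕ) = (x.i : ℕ) + 1 := by exact_mod_cast congrArg PNat.val hh
      omega
    · exfalso
      have hh : x.i = x.i + 1 + 1 := by rw [← h1]; exact g1
      have : (x.i : ℕ) = (x.i : ℕ) + 1 + 1 := by exact_mod_cast congrArg PNat.val hh
      omega

end JiaP

/-- The Scott closed set `C_j = ⋃_{k ≥ j} ↓(2,k,∞) ∪ {(1,n,∞) : n ∈ ℕ}`. -/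
def Cset (j : ℕ+) : Set JiaP :=
  (⋃ k ∈ {k : ℕ+ | j ≤ k}, {p : JiaP | p ≤ ⟨2, k, ⊤⟩}) ∪
    {p : JiaP | ∃ n : ℕ+, p = ⟨1, n, ⊤⟩}

/-!
Membership in `C_j` depends only on the first two coordinates: `p ∈ C_j` iff `p.i = 1`, or
`p.i = 2` and `j ≤ p.j`. Such a set is closed under all existing suprema, because a least upper
bound `a` of `d` always lies above some `x ∈ d` with the same first two coordinates: were every
`x ∈ d` below `a` only through the jump to the next level, then `(a.i, a.j + 1, ∞)` would be a
further upper bound not above `a`. Every `(2, k, ∞)` drops out of `C_{k+1}`.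
-/

lemma PNat.eq_one_of_two_eq_add_one {n : ℕ+} (h : 2 = n + 1) : n = 1 :=
  add_right_cancel (h.symm.trans rfl : n + 1 = 1 + 1)

namespace JiaP

lemma le_def {x y : JiaP} : x ≤ y ↔ (x.i = y.i ∧ x.j = y.j ∧ x.m ≤ y.m) ∨
    (y.i = x.i + 1 ∧ x.m ≤ (y.j : WithTop ℕ+) ∧ y.m = ⊤) := Iff.rfl

lemma exists_mem_eq_of_isLUB {d : Set JiaP} {a : JiaP} (ha : IsLUB d a) :
    ∃ x ∈ d, x.i = a.i ∧ x.j = a.j := by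
  by_contra! hjump
  have hub : (⟨a.i, a.j + 1, ⊤⟩ : JiaP) ∈ upperBounds d := by
    intro x hx
    rcases le_def.mp (ha.1 hx) with ⟨hi, hj, -⟩ | ⟨hi, hm, -⟩
    · exact absurd hj (hjump x hx hi)
    · exact Or.inr ⟨hi, hm.trans (by exact_mod_cast (PNat.lt_add_right a.j 1).le), rfl⟩
  rcases le_def.mp (ha.2 hub) with ⟨-, hj, -⟩ | ⟨hi, -, -⟩
  · exact (PNat.lt_add_right a.j 1).ne hj
  · exact (PNat.lt_add_right a.i 1).ne hi

lemma dirSupClosed_of_mem_congr {s : Set JiaP}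
    (hs : ∀ x y : JiaP, x.i = y.i → x.j = y.j → x ∈ s → y ∈ s) : DirSupClosed s := by
  intro d hds _ _ a ha
  obtain ⟨x, hxd, hi, hj⟩ := exists_mem_eq_of_isLUB ha
  exact hs x a hi hj (hds hxd)

end JiaP

lemma mem_Cset {j : ℕ+} {p : JiaP} : p ∈ Cset j ↔ p.i = 1 ∨ (p.i = 2 ∧ j ≤ p.j) := by
  simp only [Cset, Set.mem_union, Set.mem_iUnion, Set.mem_ofPred_eq, exists_prop]
  constructor
  · rintro (⟨k, hjk, ⟨hi, hj, -⟩ | ⟨hi, -, -⟩⟩ | ⟨n, rfl⟩)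
    · exact Or.inr ⟨hi, hj ▸ hjk⟩
    · exact Or.inl (PNat.eq_one_of_two_eq_add_one hi)
    · exact Or.inl rfl
  · rintro (hi | ⟨hi, hj⟩)
    · obtain ⟨i, pj, _ | c⟩ := p
      · exact Or.inr ⟨pj, by subst hi; rfl⟩
      · refine Or.inl ⟨max j c, le_max_left j c, Or.inr ⟨by subst hi; rfl, ?_, rfl⟩⟩
        exact WithTop.coe_le_coe.mpr (le_max_right j c)
    · exact Or.inl ⟨p.j, hj, Or.inl ⟨hi, rfl, le_top⟩⟩

lemma mem_Cset_of_eq {j : ℕ+} {x y : JiaP} (hi : x.i = y.i) (hj : x.j = y.j) (hx : x ∈ Cset j) :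
    y ∈ Cset j :=
  mem_Cset.mpr (hi ▸ hj ▸ mem_Cset.mp hx)

lemma Cset_anti : Antitone Cset := fun _ _ hjj' _ hp =>
  mem_Cset.mpr <| (mem_Cset.mp hp).imp_right fun ⟨hi, hj⟩ => ⟨hi, hjj'.trans hj⟩

lemma isLowerSet_Cset (j : ℕ+) : IsLowerSet (Cset j) := by
  intro q p hpq hq
  rcases JiaP.le_def.mp hpq with ⟨hi, hj, -⟩ | ⟨hi, -, -⟩
  · exact mem_Cset_of_eq hi.symm hj.symm hq
  · rcases mem_Cset.mp hq with hq1 | ⟨hq2, -⟩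
    · exact absurd (hq1 ▸ hi) (PNat.lt_add_left 1 p.i).ne
    · exact mem_Cset.mpr (Or.inl (PNat.eq_one_of_two_eq_add_one (hq2 ▸ hi)))

lemma isClosed_Cset (j : ℕ+) : @IsClosed JiaP (Topology.scott JiaP Set.univ) (Cset j) := by
  let := Topology.scott JiaP Set.univ
  have : Topology.IsScott JiaP Set.univ := ⟨rfl⟩
  exact Topology.IsScott.isClosed_iff_isLowerSet_and_dirSupClosed.mpr
    ⟨isLowerSet_Cset j, JiaP.dirSupClosed_of_mem_congr fun _ _ => mem_Cset_of_eq⟩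

lemma two_mem_Cset_iff {j k : ℕ+} : (⟨2, k, ⊤⟩ : JiaP) ∈ Cset j ↔ j ≤ k := by
  simp [mem_Cset]

/-- The sets `C_j`, `j ∈ ℕ`, form a filtered family of Scott closed subsets of Jia's dcpo,
each of which meets `{(2,j,∞) : j ∈ ℕ}`, yet `⋂_j C_j` is disjoint from `{(2,j,∞) : j ∈ ℕ}`. -/
theorem JiaP_filtered_closed_family :
    DirectedOn (fun A B : Set JiaP => B ⊆ A) (Set.range Cset) ∧
    (∀ j : ℕ+, @IsClosed JiaP (Topology.scott JiaP Set.univ) (Cset j)) ∧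
    (∀ j : ℕ+, (Cset j ∩ {p : JiaP | ∃ k : ℕ+, p = ⟨2, k, ⊤⟩}).Nonempty) ∧
    (⋂ j : ℕ+, Cset j) ∩ {p : JiaP | ∃ k : ℕ+, p = ⟨2, k, ⊤⟩} = ∅ := by
  refine ⟨?_, isClosed_Cset, fun j => ⟨⟨2, j, ⊤⟩, two_mem_Cset_iff.mpr le_rfl, j, rfl⟩, ?_⟩
  · rintro _ ⟨j₁, rfl⟩ _ ⟨j₂, rfl⟩
    exact ⟨Cset (max j₁ j₂), ⟨_, rfl⟩, Cset_anti (le_max_left _ _), Cset_anti (le_max_right _ _)⟩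
  · refine Set.eq_empty_of_forall_notMem ?_
    rintro _ ⟨hp, k, rfl⟩
    exact (PNat.lt_add_right k 1).not_ge (two_mem_Cset_iff.mp (Set.mem_iInter.mp hp (k + 1)))
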